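/- Let {G^A_i}_{i=0}^{d^2-1} and {G^B_j}_{j=0}^{d^2-1} be orthogonal operator bases on ℂ^d (Tr(G† G') = d·δ, G_0 = I, G_i traceless and Hermitian for i ≥ 1), let C = [c_{ij}] be a real (d²−1)×(d²−1) matrix, and set S = ∑_{i,j=1}^{d^2-1} c_{ij} G^A_i ⊗ G^B_j. Then for every separable state σ on ℂ^d ⊗ ℂ^d, i.e., every finite convex combination σ = ∑_k p_k ρ^A_k ⊗ ρ^B_k of Kronecker products of density matrices with p_k ≥ 0 and ∑_k p_k = 1, it holds that −(d−1)·‖C‖ ≤ Tr(S σ) ≤ (d−1)·‖C‖, where ‖C‖ is the operator norm of C. -/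

import Mathlib

open Matrix
open Kronecker
open scoped BigOperators ComplexOrder

/-- The operator norm (largest singular value) of a real square matrix,
realized as the norm of the induced continuous linear map on Euclidean space. -/
noncomputable def opNorm {n : ℕ} (C : Matrix (Fin n) (Fin n) ℝ) : ℝ :=
  ‖(Matrix.toEuclideanCLM (𝕜 := ℝ) C :
      EuclideanSpace ℝ (Fin n) →L[ℝ] EuclideanSpace ℝ (Fin n))‖

/-- A density matrix: Hermitian, positive semidefinite, trace one. -/
def IsDensityMatrix {n : Type*} [Fintype n] (ρ : Matrix n n ℂ) : Prop :=
  ρ.IsHermitian ∧ ρ.PosSemidef ∧ ρ.trace = 1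

/-- A separable state on `ℂ^d ⊗ ℂ^d`: a finite convex combination of Kronecker
products of density matrices. -/
def IsSeparableState {d : ℕ} (σ : Matrix (Fin d × Fin d) (Fin d × Fin d) ℂ) : Prop :=
  ∃ (m : ℕ) (p : Fin m → ℝ) (ρA ρB : Fin m → Matrix (Fin d) (Fin d) ℂ),
    (∀ k, 0 ≤ p k) ∧ (∑ k, p k = 1) ∧
    (∀ k, IsDensityMatrix (ρA k)) ∧ (∀ k, IsDensityMatrix (ρB k)) ∧
    σ = ∑ k, (p k : ℂ) • (ρA k ⊗ₖ ρB k)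

/-!
For a product state write `a i = tr (G^A_i ρ_A)` and `b j = tr (G^B_j ρ_B)`; then
`tr (S (ρ_A ⊗ ρ_B)) = ⟪a, C b⟫ ≤ ‖a‖ ‖C‖ ‖b‖`. Bessel's inequality for the orthonormal family
`G_k / √d` in the Hilbert–Schmidt inner product, combined with the purity bound `tr ρ² ≤ 1` and
the contribution `1` of `G_0 = I`, gives `‖a‖², ‖b‖² ≤ d - 1`, hence `|⟪a, C b⟫| ≤ (d - 1) ‖C‖`.
A separable state is a convex combination of product states, and the interval
`[-(d - 1) ‖C‖, (d - 1) ‖C‖]` is convex.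
-/

open scoped RealInnerProductSpace

section

variable {m : Type*} [Fintype m]

lemma Matrix.IsHermitian.ofReal_re_trace_mul {G ρ : Matrix m m ℂ}
    (hG : G.IsHermitian) (hρ : ρ.IsHermitian) :
    (((G * ρ).trace.re : ℝ) : ℂ) = (G * ρ).trace := by
  refine Complex.conj_eq_iff_re.mp ?_
  rw [← Complex.star_def, ← trace_conjTranspose, conjTranspose_mul, hG.eq, hρ.eq,
    trace_mul_comm]

lemma sum_normSq_trace_conjTranspose_mul_le {ι : Type*} [Fintype ι] [DecidableEq ι]
    {c : ℝ} (hc : 0 < c) (G : ι → Matrix m m ℂ)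
    (hG : ∀ k l, ((G k)ᴴ * G l).trace = if k = l then (c : ℂ) else 0) (ρ : Matrix m m ℂ) :
    ∑ k, Complex.normSq ((G k)ᴴ * ρ).trace ≤ c * (ρᴴ * ρ).trace.re := by
  classical
  -- the Hilbert–Schmidt inner product `⟪A, B⟫ = tr (Aᴴ B)`
  let := (1 : Matrix m m ℂ).toMatrixSeminormedAddCommGroup PosSemidef.one
  let := (1 : Matrix m m ℂ).toMatrixInnerProductSpace PosSemidef.one
  have hinner : ∀ A B : Matrix m m ℂ, inner ℂ A B = (Aᴴ * B).trace := fun A B => by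
    rw [trace_mul_comm]; change (B * 1 * Aᴴ).trace = _; rw [Matrix.mul_one]
  have hon : Orthonormal ℂ fun k => ((Real.sqrt c)⁻¹ : ℂ) • G k := by
    rw [orthonormal_iff_ite]
    intro k l
    rw [hinner, conjTranspose_smul, smul_mul_smul_comm, trace_smul, hG]
    split_ifs
    · have hs : (Real.sqrt c)⁻¹ * (Real.sqrt c)⁻¹ * c = 1 := by
        rw [← mul_inv, Real.mul_self_sqrt hc.le, inv_mul_cancel₀ hc.ne']
      simpa [← Complex.ofReal_inv] using congrArg Complex.ofReal hs
    · simp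
  have hbessel := hon.sum_inner_products_le ρ (s := Finset.univ)
  have hterm : ∀ k, ‖inner ℂ (((Real.sqrt c)⁻¹ : ℂ) • G k) ρ‖ ^ 2
      = c⁻¹ * Complex.normSq ((G k)ᴴ * ρ).trace := fun k => by
    rw [inner_smul_left, hinner, norm_mul, mul_pow, Complex.sq_norm, Complex.sq_norm]
    simp [Real.mul_self_sqrt hc.le]
  have hnorm : ‖ρ‖ ^ 2 = (ρᴴ * ρ).trace.re := by
    rw [← hinner]; exact norm_sq_eq_re_inner (𝕜 := ℂ) ρ
  simp only [hterm, hnorm, ← Finset.mul_sum] at hbessel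
  exact (inv_mul_le_iff₀ hc).mp hbessel

lemma IsDensityMatrix.re_trace_mul_self_le_one {ρ : Matrix m m ℂ} (hρ : IsDensityMatrix ρ) :
    (ρ * ρ).trace.re ≤ 1 := by
  classical
  obtain ⟨hH, hpsd, htr⟩ := hρ
  have hsum : ∑ i, hH.eigenvalues i = 1 := by
    simpa [hH.trace_eq_sum_eigenvalues, ← Complex.ofReal_sum] using congrArg Complex.re htr
  have hsq : (ρ * ρ).trace.re = ∑ i, hH.eigenvalues i ^ 2 := by
    conv_lhs => rw [hH.spectral_theorem, ← map_mul, Unitary.conjStarAlgAut_apply, trace_mul_cycle,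
      Unitary.coe_star_mul_self, one_mul, diagonal_mul_diagonal, trace_diagonal]
    simp [sq]
  calc (ρ * ρ).trace.re = ∑ i, hH.eigenvalues i ^ 2 := hsq
    _ ≤ (∑ i, hH.eigenvalues i) ^ 2 :=
      Finset.sum_sq_le_sq_sum_of_nonneg fun i _ => hpsd.eigenvalues_nonneg i
    _ = 1 := by rw [hsum, one_pow]

variable {n : ℕ}

noncomputable def blochVector (G : Fin (n + 1) → Matrix m m ℂ) (ρ : Matrix m m ℂ) :
    EuclideanSpace ℝ (Fin n) :=
  WithLp.toLp 2 fun i => (G i.succ * ρ).trace.re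

lemma IsDensityMatrix.card_pos {ρ : Matrix m m ℂ} (hρ : IsDensityMatrix ρ) :
    0 < Fintype.card m := by
  have htr : ρ.trace ≠ 0 := hρ.2.2 ▸ one_ne_zero
  obtain ⟨i, -, -⟩ := Finset.exists_ne_zero_of_sum_ne_zero htr
  exact Fintype.card_pos_iff.mpr ⟨i⟩

lemma IsDensityMatrix.norm_blochVector_sq_le [DecidableEq m] {G : Fin (n + 1) → Matrix m m ℂ}
    (hG : ∀ k l, ((G k)ᴴ * G l).trace = if k = l then (Fintype.card m : ℂ) else 0)
    (hG0 : G 0 = 1) (hGherm : ∀ i : Fin n, (G i.succ).IsHermitian)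
    {ρ : Matrix m m ℂ} (hρ : IsDensityMatrix ρ) :
    ‖blochVector G ρ‖ ^ 2 ≤ Fintype.card m - 1 := by
  have hbessel := sum_normSq_trace_conjTranspose_mul_le (by exact_mod_cast hρ.card_pos) G hG ρ
  have hpurity := hρ.re_trace_mul_self_le_one
  have hterm : ∀ i : Fin n, Complex.normSq ((G i.succ)ᴴ * ρ).trace
      = (G i.succ * ρ).trace.re ^ 2 := fun i => by
    rw [(hGherm i).eq, ← (hGherm i).ofReal_re_trace_mul hρ.1, Complex.normSq_ofReal,
      Complex.ofReal_re, sq]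
  rw [Fin.sum_univ_succ, hG0, conjTranspose_one, Matrix.one_mul, hρ.2.2, map_one,
    Finset.sum_congr rfl fun i _ => hterm i, hρ.1.eq] at hbessel
  calc ‖blochVector G ρ‖ ^ 2 = ∑ i : Fin n, (G i.succ * ρ).trace.re ^ 2 := by
        rw [EuclideanSpace.real_norm_sq_eq]; rfl
    _ ≤ Fintype.card m * (ρ * ρ).trace.re - 1 := by linarith
    _ ≤ Fintype.card m - 1 := by
        gcongr
        exact mul_le_of_le_one_right (Nat.cast_nonneg _) hpurity

lemma trace_mul_kronecker_eq_inner_blochVector {m' : Type*} [Fintype m']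
    {GA : Fin (n + 1) → Matrix m m ℂ} {GB : Fin (n + 1) → Matrix m' m' ℂ}
    (hGAherm : ∀ i : Fin n, (GA i.succ).IsHermitian)
    (hGBherm : ∀ i : Fin n, (GB i.succ).IsHermitian) (C : Matrix (Fin n) (Fin n) ℝ)
    {ρA : Matrix m m ℂ} {ρB : Matrix m' m' ℂ}
    (hρA : ρA.IsHermitian) (hρB : ρB.IsHermitian) :
    ((∑ i, ∑ j, (C i j : ℂ) • (GA i.succ ⊗ₖ GB j.succ)) * (ρA ⊗ₖ ρB)).trace
      = (⟪blochVector GA ρA, toEuclideanCLM (𝕜 := ℝ) C (blochVector GB ρB)⟫ : ℝ) := by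
  have hprod : ∀ i j : Fin n, ((GA i.succ ⊗ₖ GB j.succ) * (ρA ⊗ₖ ρB)).trace
      = (((GA i.succ * ρA).trace.re * (GB j.succ * ρB).trace.re : ℝ) : ℂ) := fun i j => by
    rw [← mul_kronecker_mul, trace_kronecker, Complex.ofReal_mul,
      (hGAherm i).ofReal_re_trace_mul hρA, (hGBherm j).ofReal_re_trace_mul hρB]
  simp only [Finset.sum_mul, trace_sum, smul_mul, trace_smul, hprod, smul_eq_mul]
  rw [blochVector, blochVector, toEuclideanCLM_toLp, PiLp.inner_apply]
  simp only [RCLike.inner_apply, conj_trivial, mulVec, dotProduct]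
  push_cast [Finset.sum_mul]
  exact Finset.sum_congr rfl fun i _ => Finset.sum_congr rfl fun j _ => by ring

lemma abs_inner_blochVector_toEuclideanCLM_le [DecidableEq m]
    {GA GB : Fin (n + 1) → Matrix m m ℂ}
    (hGA : ∀ k l, ((GA k)ᴴ * GA l).trace = if k = l then (Fintype.card m : ℂ) else 0)
    (hGB : ∀ k l, ((GB k)ᴴ * GB l).trace = if k = l then (Fintype.card m : ℂ) else 0)
    (hGA0 : GA 0 = 1) (hGB0 : GB 0 = 1)
    (hGAherm : ∀ i : Fin n, (GA i.succ).IsHermitian)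
    (hGBherm : ∀ i : Fin n, (GB i.succ).IsHermitian) (C : Matrix (Fin n) (Fin n) ℝ)
    {ρA ρB : Matrix m m ℂ} (hρA : IsDensityMatrix ρA) (hρB : IsDensityMatrix ρB) :
    |⟪blochVector GA ρA, toEuclideanCLM (𝕜 := ℝ) C (blochVector GB ρB)⟫|
      ≤ (Fintype.card m - 1) * opNorm C := by
  set a := blochVector GA ρA
  set b := blochVector GB ρB
  have ha := hρA.norm_blochVector_sq_le hGA hGA0 hGAherm
  have hb := hρB.norm_blochVector_sq_le hGB hGB0 hGBherm
  have hC : 0 ≤ opNorm C := norm_nonneg _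
  calc |⟪a, toEuclideanCLM (𝕜 := ℝ) C b⟫|
        ≤ ‖a‖ * ‖toEuclideanCLM (𝕜 := ℝ) C b‖ := abs_real_inner_le_norm _ _
    _ ≤ ‖a‖ * (opNorm C * ‖b‖) := by gcongr; exact ContinuousLinearMap.le_opNorm _ _
    _ = opNorm C * (‖a‖ * ‖b‖) := by ring
    _ ≤ opNorm C * (Fintype.card m - 1) := by
        gcongr
        nlinarith [sq_nonneg (‖a‖ - ‖b‖)]
    _ = (Fintype.card m - 1) * opNorm C := mul_comm _ _

end

theorem stmt3_general (d n : ℕ)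
    (GA GB : Fin (n + 1) → Matrix (Fin d) (Fin d) ℂ)
    (hGA : ∀ k l, ((GA k)ᴴ * GA l).trace = if k = l then (d : ℂ) else 0)
    (hGB : ∀ k l, ((GB k)ᴴ * GB l).trace = if k = l then (d : ℂ) else 0)
    (hGA0 : GA 0 = 1) (hGB0 : GB 0 = 1)
    (hGAherm : ∀ i : Fin n, (GA i.succ).IsHermitian)
    (hGBherm : ∀ i : Fin n, (GB i.succ).IsHermitian)
    (C : Matrix (Fin n) (Fin n) ℝ)
    (S : Matrix (Fin d × Fin d) (Fin d × Fin d) ℂ)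
    (hS : S = ∑ i : Fin n, ∑ j : Fin n, (C i j : ℂ) • (GA i.succ ⊗ₖ GB j.succ))
    (σ : Matrix (Fin d × Fin d) (Fin d × Fin d) ℂ) (hσ : IsSeparableState σ) :
    ∃ r : ℝ, (S * σ).trace = (r : ℂ) ∧
      -(((d : ℝ) - 1) * opNorm C) ≤ r ∧ r ≤ ((d : ℝ) - 1) * opNorm C := by
  obtain ⟨m, p, ρA, ρB, hp0, hp1, hρA, hρB, rfl⟩ := hσ
  subst hS
  set r : Fin m → ℝ := fun k =>
    ⟪blochVector GA (ρA k), toEuclideanCLM (𝕜 := ℝ) C (blochVector GB (ρB k))⟫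
  have hr : ∀ k ∈ Finset.univ,
      r k ∈ Set.Icc (-(((d : ℝ) - 1) * opNorm C)) (((d : ℝ) - 1) * opNorm C) := fun k _ =>
    abs_le.mp <| by
      simpa only [Fintype.card_fin] using abs_inner_blochVector_toEuclideanCLM_le
        (by simpa only [Fintype.card_fin] using hGA) (by simpa only [Fintype.card_fin] using hGB)
        hGA0 hGB0 hGAherm hGBherm C (hρA k) (hρB k)
  refine ⟨∑ k, p k • r k, ?_, (convex_Icc _ _).sum_mem (fun k _ => hp0 k) hp1 hr⟩
  rw [Finset.mul_sum, trace_sum, Complex.ofReal_sum]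
  refine Finset.sum_congr rfl fun k _ => ?_
  rw [Matrix.mul_smul, trace_smul, trace_mul_kronecker_eq_inner_blochVector hGAherm hGBherm C
    (hρA k).1 (hρB k).1, smul_eq_mul, smul_eq_mul, Complex.ofReal_mul]

/-- For orthogonal Hermitian operator bases on `ℂ^d`, a real
`(d²−1)×(d²−1)` matrix `C` and `S = ∑_{i,j≥1} c_{ij} G^A_i ⊗ G^B_j`, every
separable state `σ` satisfies `−(d−1)‖C‖ ≤ Tr(Sσ) ≤ (d−1)‖C‖`. -/
theorem stmt3 (d n : ℕ) (hn : n + 1 = d ^ 2)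
    (GA GB : Fin (n + 1) → Matrix (Fin d) (Fin d) ℂ)
    (hGA : ∀ k l, ((GA k)ᴴ * GA l).trace = if k = l then (d : ℂ) else 0)
    (hGB : ∀ k l, ((GB k)ᴴ * GB l).trace = if k = l then (d : ℂ) else 0)
    (hGA0 : GA 0 = 1) (hGB0 : GB 0 = 1)
    (hGAtr : ∀ i : Fin n, (GA i.succ).trace = 0)
    (hGBtr : ∀ i : Fin n, (GB i.succ).trace = 0)
    (hGAherm : ∀ i : Fin n, (GA i.succ).IsHermitian)
    (hGBherm : ∀ i : Fin n, (GB i.succ).IsHermitian)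
    (C : Matrix (Fin n) (Fin n) ℝ)
    (S : Matrix (Fin d × Fin d) (Fin d × Fin d) ℂ)
    (hS : S = ∑ i : Fin n, ∑ j : Fin n, (C i j : ℂ) • (GA i.succ ⊗ₖ GB j.succ))
    (σ : Matrix (Fin d × Fin d) (Fin d × Fin d) ℂ) (hσ : IsSeparableState σ) :
    ∃ r : ℝ, (S * σ).trace = (r : ℂ) ∧
      -(((d : ℝ) - 1) * opNorm C) ≤ r ∧ r ≤ ((d : ℝ) - 1) * opNorm C :=
  stmt3_general d n GA GB hGA hGB hGA0 hGB0 hGAherm hGBherm C S hS σ hσ
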